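/- Let $k$ be a field of characteristic zero, $A$ a commutative $k$-algebra, and $\partial \in \mathrm{Der}_k(A)$. Then for every $r \geq 0$, the $r$-th Fitting ideal of the module of Kähler differentials satisfies $\partial(\mathrm{Fitt}_r(\Omega^1_{A/k})) \subseteq \mathrm{Fitt}_r(\Omega^1_{A/k})$, provided $\Omega^1_{A/k}$ is finitely generated. -/

import Mathlib

/-!
A `k`-derivation `D` of `A` acts on `Ω[A⁄k]` by the Lie derivative `y dx ↦ D y dx + y d(D x)`,
an additive map `N` with `N (a • ω) = D a • ω + a • N ω`. Along a presentation
`π : Aⁿ → Ω[A⁄k]` it lifts to `u ↦ D ∘ u + u ᵥ* W` for some matrix `W`, which maps relations to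
relations. By Jacobi's formula `D (det V) = tr (adj V * V.map D)`, so `D` of a minor of a
relation matrix is again a combination of such minors.
-/

/-- The `r`-th Fitting ideal of a module `M`: for a presentation
`(Fin n → R) →ₗ M` (surjective), it is generated by the `(n - r) × (n - r)`
minors of matrices whose rows are relations (elements of the kernel). -/
def fittingIdeal (R : Type*) [CommRing R] (M : Type*) [AddCommGroup M] [Module R M]
    (r : ℕ) : Ideal R :=
  ⨆ (n : ℕ) (π : (Fin n → R) →ₗ[R] M) (_ : Function.Surjective π),
    Ideal.span { d : R | ∃ (m : ℕ) (_ : m + r = n) (v : Fin m → (Fin n → R))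
      (g : Fin m → Fin n), (∀ i, π (v i) = 0) ∧
      d = Matrix.det (Matrix.of fun i j : Fin m => v i (g j)) }

open Finset Matrix

namespace Matrix

variable {R : Type*} [CommRing R] {m : Type*} [Fintype m] [DecidableEq m]

theorem adjugate_mul_apply {n : Type*} (M : Matrix m m R) (V : Matrix m n R) (j : m) (l : n) :
    (M.adjugate * V) j l = (M.updateCol j fun i => V i l).det := by
  rw [← cramer_apply, cramer_eq_adjugate_mulVec]
  rfl

theorem trace_adjugate_mul (M X : Matrix m m R) :
    (M.adjugate * X).trace = ∑ i, (M.updateCol i fun r => X r i).det :=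
  Finset.sum_congr rfl fun i _ => adjugate_mul_apply M X i i

theorem trace_mul_adjugate (M X : Matrix m m R) :
    (X * M.adjugate).trace = ∑ i, (M.updateRow i (X i)).det := by
  rw [← trace_transpose, transpose_mul, adjugate_transpose, trace_adjugate_mul]
  refine sum_congr rfl fun i _ => ?_
  rw [← det_transpose (M.updateRow i (X i)), ← updateCol_transpose]
  rfl

end Matrix

namespace Derivation

section

variable {R A M : Type*} [CommSemiring R] [CommSemiring A] [Algebra R A] [AddCommMonoid M]
  [Module A M] [Module R M]

theorem leibniz_prod (D : Derivation R A M) {ι : Type*} [DecidableEq ι] (s : Finset ι)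
    (f : ι → A) : D (∏ i ∈ s, f i) = ∑ i ∈ s, (∏ j ∈ s.erase i, f j) • D (f i) := by
  induction s using Finset.induction_on with
  | empty => simp
  | insert a s ha ih =>
    rw [prod_insert ha, leibniz, ih, sum_insert ha, erase_insert ha, smul_sum, add_comm]
    congr 1
    refine sum_congr rfl fun i hi => ?_
    rw [erase_insert_of_ne (ne_of_mem_of_not_mem hi ha).symm,
      prod_insert (fun h => ha (mem_of_mem_erase h)), mul_smul]

end

variable {R A : Type*} [CommSemiring R] [CommRing A] [Algebra R A]

section Det

variable {m : Type*} [Fintype m] [DecidableEq m]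

theorem map_det_eq_sum (D : Derivation R A A) (M : Matrix m m A) :
    D M.det = ∑ i, (M.updateCol i fun r => D (M r i)).det := by
  simp only [det_apply, map_sum, map_zsmul_unit, leibniz_prod, smul_sum]
  rw [sum_comm]
  refine sum_congr rfl fun i _ => sum_congr rfl fun σ _ => ?_
  rw [← mul_prod_erase _ _ (mem_univ i), updateCol_self, smul_eq_mul, mul_comm]
  congr 2
  exact prod_congr rfl fun j hj => by rw [updateCol_ne (ne_of_mem_erase hj)]

theorem map_det (D : Derivation R A A) (M : Matrix m m A) :
    D M.det = (M.adjugate * M.map D).trace := by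
  rw [map_det_eq_sum, trace_adjugate_mul]
  rfl

end Det

variable (D : Derivation R A A)

theorem mapsTo_span {S : Set A} (hS : Set.MapsTo D S (Ideal.span S)) :
    Set.MapsTo D (Ideal.span S) (Ideal.span S) := by
  intro x hx
  induction hx using Submodule.span_induction with
  | mem s hs => exact hS hs
  | zero => simp
  | add x y _ _ hx hy => rw [map_add]; exact add_mem hx hy
  | smul a x hx' hx =>
    rw [smul_eq_mul, leibniz, smul_eq_mul, smul_eq_mul]
    exact add_mem (Ideal.mul_mem_left _ _ hx) (Ideal.mul_mem_right _ _ hx')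

theorem mapsTo_iSup {ι : Sort*} {I : ι → Ideal A} (h : ∀ i, Set.MapsTo D (I i) (I i)) :
    Set.MapsTo D ↑(⨆ i, I i) ↑(⨆ i, I i) := by
  intro x hx
  refine Submodule.iSup_induction I (motive := fun x => D x ∈ ⨆ i, I i) hx
    (fun i x hx => Ideal.mem_iSup_of_mem i (h i hx)) (by simp) fun x y hx hy => ?_
  rw [map_add]
  exact add_mem hx hy

end Derivation

section Connection

variable {R A M : Type*} [CommSemiring R] [CommRing A] [Algebra R A] [AddCommGroup M]
  [Module A M]

def IsConnectionAlong (D : Derivation R A A) (N : M →+ M) : Prop :=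
  ∀ (a : A) (x : M), N (a • x) = D a • x + a • N x

variable {D : Derivation R A A}

theorem exists_isConnectionAlong_of_surjective {P : Type*} [AddCommGroup P] [Module A P]
    {E : P →+ P} (hE : IsConnectionAlong D E) (q : P →ₗ[A] M) (hq : Function.Surjective q)
    (hker : ∀ p, q p = 0 → q (E p) = 0) : ∃ N : M →+ M, IsConnectionAlong D N := by
  let N := q.toAddMonoidHom.liftOfSurjective hq ⟨q.toAddMonoidHom.comp E, fun p hp => hker p hp⟩
  have hN : ∀ p, N (q p) = q (E p) := fun p =>
    AddMonoidHom.liftOfRightInverse_comp_apply _ _ _ _ p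
  refine ⟨N, fun a x => ?_⟩
  obtain ⟨p, rfl⟩ := hq x
  rw [← map_smul, hN, hN, hE, map_add, map_smul, map_smul]

theorem IsConnectionAlong.exists_matrix_lift {N : M →+ M} (hN : IsConnectionAlong D N)
    {ι : Type*} [Fintype ι] [DecidableEq ι] (π : (ι → A) →ₗ[A] M) (hπ : Function.Surjective π) :
    ∃ W : Matrix ι ι A, ∀ u : ι → A, π (⇑D ∘ u + u ᵥ* W) = N (π u) := by
  choose w hw using fun l : ι => hπ (N (π (Pi.single l 1)))
  refine ⟨Matrix.of w, fun u => ?_⟩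
  calc π (⇑D ∘ u + u ᵥ* Matrix.of w)
      = ∑ l, (D (u l) • π (Pi.single l 1) + u l • π (w l)) := by
        rw [map_add, vecMul_eq_sum, ← (Pi.basisFun A ι).sum_repr (⇑D ∘ u)]
        simp only [Pi.basisFun_repr, Function.comp_apply, Pi.basisFun_apply, map_sum, map_smul,
          sum_add_distrib]
        rfl
    _ = N (π u) := by
        conv_rhs => rw [← (Pi.basisFun A ι).sum_repr u]
        simp only [map_sum, map_smul, Pi.basisFun_repr, Pi.basisFun_apply]
        exact sum_congr rfl fun l _ => by rw [hN, hw]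

end Connection

namespace KaehlerDifferential

open Finsupp

variable {R A : Type*} [CommRing R] [CommRing A] [Algebra R A] (D : Derivation R A A)

/-- On the presentation `A →₀ A` of `Ω[A⁄R]`, where `single x y` stands for `y dx`, the Lie
derivative `y dx ↦ D y dx + y d(D x)`. -/
noncomputable def lieDerivTotal : (A →₀ A) →+ (A →₀ A) :=
  mapRange.addMonoidHom D.toLinearMap.toAddMonoidHom + mapDomain.addMonoidHom D

theorem lieDerivTotal_single (x y : A) :
    lieDerivTotal D (single x y) = single x (D y) + single (D x) y := by
  simp [lieDerivTotal]

theorem isConnectionAlong_lieDerivTotal : IsConnectionAlong D (lieDerivTotal D) := by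
  intro a p
  induction p using Finsupp.induction_linear with
  | zero => simp
  | add p p' hp hp' => rw [smul_add, map_add, hp, hp', map_add, smul_add, smul_add]; abel
  | single x y =>
    rw [Finsupp.smul_single, lieDerivTotal_single, lieDerivTotal_single, smul_eq_mul,
      Derivation.leibniz]
    simp only [smul_eq_mul, smul_add, Finsupp.smul_single, Finsupp.single_add, mul_comm y (D a)]
    abel

theorem linearCombination_lieDerivTotal_single (x y : A) :
    linearCombination A (KaehlerDifferential.D R A) (lieDerivTotal D (single x y)) =
      D y • KaehlerDifferential.D R A x + y • KaehlerDifferential.D R A (D x) := by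
  simp [lieDerivTotal_single]

theorem linearCombination_lieDerivTotal_eq_zero {p : A →₀ A} (hp : p ∈ kerTotal R A) :
    linearCombination A (KaehlerDifferential.D R A) (lieDerivTotal D p) = 0 := by
  induction hp using Submodule.span_induction with
  | mem p hp =>
    rcases hp with (⟨⟨x, y⟩, rfl⟩ | ⟨⟨x, y⟩, rfl⟩) | ⟨r, rfl⟩
    · simp [linearCombination_lieDerivTotal_single]
    · simp [linearCombination_lieDerivTotal_single]
      abel
    · simp [linearCombination_lieDerivTotal_single]
  | zero => simp
  | add p p' _ _ hp hp' => rw [map_add, map_add, hp, hp', add_zero]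
  | smul a p hp' hp =>
    rw [isConnectionAlong_lieDerivTotal, map_add, map_smul, map_smul, hp,
      LinearMap.mem_ker.mp ((kerTotal_eq R A).ge hp'), smul_zero, smul_zero, add_zero]

theorem exists_isConnectionAlong :
    ∃ N : Ω[A⁄R] →+ Ω[A⁄R], IsConnectionAlong D N :=
  exists_isConnectionAlong_of_surjective (isConnectionAlong_lieDerivTotal D) _
    (linearCombination_surjective R A) fun _ hp =>
      linearCombination_lieDerivTotal_eq_zero D ((kerTotal_eq R A).le hp)

end KaehlerDifferential

section Fitting

variable {R A M : Type*} [CommSemiring R] [CommRing A] [Algebra R A] [AddCommGroup M]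
  [Module A M] {ι : Type*}

def relationMinors (π : (ι → A) →ₗ[A] M) (m : ℕ) : Ideal A :=
  Ideal.span {d | ∃ (v : Fin m → ι → A) (g : Fin m → ι), (∀ i, π (v i) = 0) ∧
    d = (Matrix.of fun i j => v i (g j)).det}

variable {π : (ι → A) →ₗ[A] M} {m : ℕ} {v : Fin m → ι → A}

theorem det_updateRow_mem_relationMinors (hv : ∀ i, π (v i) = 0) (g : Fin m → ι) (i : Fin m)
    {x : ι → A} (hx : π x = 0) :
    ((Matrix.of fun i j => v i (g j)).updateRow i fun j => x (g j)).det ∈ relationMinors π m := by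
  refine Ideal.subset_span ⟨Function.update v i x, g, fun i' => ?_, ?_⟩
  · rcases eq_or_ne i' i with rfl | hne
    · rwa [Function.update_self]
    · rw [Function.update_of_ne hne, hv]
  · congr 1
    ext a b
    rcases eq_or_ne a i with rfl | hne <;> simp [*]

theorem det_updateCol_mem_relationMinors (hv : ∀ i, π (v i) = 0) (g : Fin m → ι) (j : Fin m)
    (l : ι) :
    ((Matrix.of fun i j => v i (g j)).updateCol j fun i => v i l).det ∈ relationMinors π m := by
  refine Ideal.subset_span ⟨v, Function.update g j l, hv, ?_⟩
  congr 1
  ext a b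
  rcases eq_or_ne b j with rfl | hne <;> simp [*]

variable [Fintype ι] [DecidableEq ι] {D : Derivation R A A} {N : M →+ M}

theorem IsConnectionAlong.derivation_det_mem_relationMinors (hN : IsConnectionAlong D N)
    (hπ : Function.Surjective π) (hv : ∀ i, π (v i) = 0) (g : Fin m → ι) :
    D (of fun i j => v i (g j)).det ∈ relationMinors π m := by
  obtain ⟨W, hW⟩ := hN.exists_matrix_lift π hπ
  -- Row `i` of `V.map D` is the lifted relation `D ∘ v i + v i ᵥ* W`, minus `v i ᵥ* W`: the first
  -- part yields minors with a row replaced by a relation, the second (by Cramer's rule) minors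
  -- with a column replaced by another column of `v`.
  set V : Matrix (Fin m) (Fin m) A := of fun i j => v i (g j)
  have hsplit : V.map D = (of fun i j => (⇑D ∘ v i + v i ᵥ* W) (g j)) -
      of v * of fun l j => W l (g j) := by
    ext i j
    simp [V, vecMul, dotProduct, mul_apply]
  rw [D.map_det, hsplit, Matrix.mul_sub, trace_sub, trace_mul_comm, trace_mul_adjugate,
    trace_mul_cycle']
  refine sub_mem (sum_mem fun i _ => det_updateRow_mem_relationMinors hv g i
    (x := ⇑D ∘ v i + v i ᵥ* W) ?_) ?_
  · rw [hW, hv, map_zero]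
  · refine sum_mem fun l _ => ?_
    rw [diag_apply, mul_apply]
    refine sum_mem fun j _ => Ideal.mul_mem_left _ _ ?_
    rw [adjugate_mul_apply]
    exact det_updateCol_mem_relationMinors hv g j l

theorem IsConnectionAlong.mapsTo_fittingIdeal (hN : IsConnectionAlong D N) (r : ℕ) :
    Set.MapsTo D (fittingIdeal A M r) (fittingIdeal A M r) := by
  refine D.mapsTo_iSup fun n => D.mapsTo_iSup fun π => D.mapsTo_iSup fun hπ => D.mapsTo_span ?_
  rintro _ ⟨m, hm, v, g, hv, rfl⟩
  refine Ideal.span_mono ?_ (hN.derivation_det_mem_relationMinors hπ hv g)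
  rintro _ ⟨v', g', hv', rfl⟩
  exact ⟨m, hm, v', g', hv', rfl⟩

end Fitting

theorem stmt_9_general (k : Type*) [Field k] (A : Type*) [CommRing A] [Algebra k A]
    (D : Derivation k A A) :
    ∀ r : ℕ, ∀ x ∈ fittingIdeal A (KaehlerDifferential k A) r,
      D x ∈ fittingIdeal A (KaehlerDifferential k A) r := by
  obtain ⟨N, hN⟩ := KaehlerDifferential.exists_isConnectionAlong D
  exact fun r _ hx => hN.mapsTo_fittingIdeal r hx

/-- in characteristic zero, the Fitting ideals of the module of
Kähler differentials are invariant under every `k`-derivation of `A`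
(assuming `Ω¹_{A/k}` is finitely generated). -/
theorem stmt_9 (k : Type*) [Field k] [CharZero k] (A : Type*) [CommRing A] [Algebra k A]
    (D : Derivation k A A) [Module.Finite A (KaehlerDifferential k A)] :
    ∀ r : ℕ, ∀ x ∈ fittingIdeal A (KaehlerDifferential k A) r,
      D x ∈ fittingIdeal A (KaehlerDifferential k A) r :=
  stmt_9_general k A D
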